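/- There exists a real number x₀ with 1 < x₀ < 2 such that F is strictly decreasing on the interval (1, x₀] and strictly increasing on the interval [x₀, ∞); in particular, F attains its global minimum on (1,∞) at x₀. -/

import Mathlib

/-!
With `a = x / 2 - 1 / 4` we have `log F x = log Γ(a + 5/4) + log Γ(a - 1/4) - 2 log Γ(a)`.
Differentiating the Euler limit for `log Γ` gives `ψ(x + c) - ψ(x) = ∑ₘ (1/(x+m) - 1/(x+m+c))`
for the digamma function `ψ`, so `(log F)'` has the sign of `g(a) = ∑ₘ t(a + m)`, where
`t(s) = 2/s - 1/(s + 5/4) - 1/(s - 1/4) = (s - 5/8) / (s (s + 5/4) (s - 1/4))`.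
For `a ≥ 5/8` every term is nonnegative, so `g a > 0`. At `a = 1/3` the first term is about
`-6.6` while the tail is at most `3/4`, so `g (1/3) < 0`. On `(1/4, 5/8]` the pole of `t` at
`1/4` makes `t` increase with slope at least `3/2`, while a telescoping bound shows the tail
decreases with slope at most `32/25`; so `g` is strictly increasing there. Hence `g` has exactly
one zero `a₀ ∈ (1/3, 5/8)`, and `x₀ = 2 a₀ + 1/2`.
-/

/-- `F(x) = Γ(x/2+1) · Γ(x/2−1/2) / Γ(x/2−1/4)²`. -/
noncomputable def F (x : ℝ) : ℝ :=
  Real.Gamma (x / 2 + 1) * Real.Gamma (x / 2 - 1 / 2) / Real.Gamma (x / 2 - 1 / 4) ^ 2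

open Real Filter Set Topology

theorem hasDerivAt_logGammaSeq {x : ℝ} (hx : 0 < x) (n : ℕ) :
    HasDerivAt (fun y ↦ BohrMollerup.logGammaSeq y n)
      (log n - ∑ m ∈ Finset.range (n + 1), (x + m)⁻¹) x := by
  have hlog : ∀ m ∈ Finset.range (n + 1), HasDerivAt (fun y ↦ log (y + m)) (x + m)⁻¹ x :=
    fun m _ ↦ by
      simpa using ((hasDerivAt_id x).add_const (m : ℝ)).log (by positivity)
  exact (((hasDerivAt_id x).mul_const (log n)).add_const _).sub (HasDerivAt.fun_sum hlog)
    |>.congr_deriv (by simp)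

theorem abs_inv_add_sub_inv_add_le {β c x : ℝ} (m : ℕ) (hβ : 0 < β) (hx : β ≤ x)
    (hxc : β ≤ x + c) : |(x + m)⁻¹ - (x + m + c)⁻¹| ≤ |c| / (m + β) ^ 2 := by
  have h1 : 0 < x + m := by linarith [m.cast_nonneg (α := ℝ)]
  have h2 : 0 < x + m + c := by linarith [m.cast_nonneg (α := ℝ)]
  rw [inv_sub_inv h1.ne' h2.ne', abs_div, abs_of_pos (mul_pos h1 h2), sq]
  have : (m + β) * (m + β) ≤ (x + m) * (x + m + c) := by
    apply mul_le_mul <;> linarith [m.cast_nonneg (α := ℝ)]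
  rw [show x + m + c - (x + m) = c by ring]
  gcongr

theorem summable_abs_div_nat_add_sq (c : ℝ) {β : ℝ} (hβ : 0 < β) :
    Summable fun m : ℕ ↦ |c| / (m + β) ^ 2 := by
  have := (Real.summable_one_div_nat_add_rpow β 2).2 one_lt_two
  refine (this.mul_left |c|).congr fun m ↦ ?_
  rw [abs_of_pos (by positivity : (0:ℝ) < m + β), rpow_two]
  ring

theorem summable_inv_add_sub_inv_add {c x : ℝ} (hx : 0 < x) (hxc : 0 < x + c) :
    Summable fun m : ℕ ↦ (x + m)⁻¹ - (x + m + c)⁻¹ :=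
  (summable_abs_div_nat_add_sq c (lt_min hx hxc)).of_norm_bounded fun m ↦
    abs_inv_add_sub_inv_add_le m (lt_min hx hxc) (min_le_left _ _) (min_le_right _ _)

theorem tendstoLocallyUniformlyOn_sum_inv_sub_inv (c : ℝ) :
    TendstoLocallyUniformlyOn
      (fun n (x : ℝ) ↦ ∑ m ∈ Finset.range (n + 1), ((x + m)⁻¹ - (x + m + c)⁻¹))
      (fun x : ℝ ↦ ∑' m : ℕ, ((x + m)⁻¹ - (x + m + c)⁻¹)) atTop (Ioi (max 0 (-c))) := by
  intro v hv x hx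
  rw [mem_Ioi, max_lt_iff] at hx
  obtain ⟨β, hβ, hβx, hβxc⟩ : ∃ β, 0 < β ∧ 2 * β ≤ x ∧ 2 * β ≤ x + c :=
    ⟨min x (x + c) / 2, div_pos (lt_min hx.1 (by linarith)) two_pos,
      by linarith [min_le_left x (x + c)], by linarith [min_le_right x (x + c)]⟩
  refine ⟨Ioi (x - β), mem_nhdsWithin_of_mem_nhds (Ioi_mem_nhds (by linarith)), ?_⟩
  have hunif := tendstoUniformlyOn_tsum_nat (summable_abs_div_nat_add_sq c hβ)
    (f := fun m (y : ℝ) ↦ (y + m)⁻¹ - (y + m + c)⁻¹) (s := Ioi (x - β))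
    fun m y (hy : x - β < y) ↦ abs_inv_add_sub_inv_add_le m hβ (by linarith) (by linarith)
  exact (tendsto_add_atTop_nat 1).eventually (hunif v hv)

theorem continuousOn_tsum_inv_sub_inv (c : ℝ) :
    ContinuousOn (fun x : ℝ ↦ ∑' m : ℕ, ((x + m)⁻¹ - (x + m + c)⁻¹)) (Ioi (max 0 (-c))) := by
  refine (tendstoLocallyUniformlyOn_sum_inv_sub_inv c).continuousOn
    (Frequently.of_forall fun n ↦ continuousOn_finsetSum _ fun m _ x hx ↦ ?_)
  rw [mem_Ioi, max_lt_iff] at hx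
  have hm : (0 : ℝ) ≤ m := m.cast_nonneg
  have h1 : x + m ≠ 0 := by linarith
  have h2 : x + m + c ≠ 0 := by linarith
  exact ContinuousAt.continuousWithinAt (by fun_prop (disch := assumption))

theorem hasDerivAt_log_Gamma_add_sub_log_Gamma {c x : ℝ} (hx : 0 < x) (hxc : 0 < x + c) :
    HasDerivAt (fun y ↦ log (Gamma (y + c)) - log (Gamma y))
      (∑' m : ℕ, ((x + m)⁻¹ - (x + m + c)⁻¹)) x := by
  refine hasDerivAt_of_tendstoLocallyUniformlyOn isOpen_Ioi
    (tendstoLocallyUniformlyOn_sum_inv_sub_inv c)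
    (f := fun n y ↦ BohrMollerup.logGammaSeq (y + c) n - BohrMollerup.logGammaSeq y n)
    (Eventually.of_forall fun n y hy ↦ ?_) (fun y hy ↦ ?_)
    (show x ∈ Ioi (max 0 (-c)) from max_lt hx (by linarith))
  · rw [mem_Ioi, max_lt_iff] at hy
    refine (((hasDerivAt_logGammaSeq (x := y + c) (by linarith) n).comp_add_const y c).sub
      (hasDerivAt_logGammaSeq hy.1 n)).congr_deriv ?_
    simp only [Finset.sum_sub_distrib, add_right_comm y c]
    ring
  · rw [mem_Ioi, max_lt_iff] at hy
    exact (BohrMollerup.tendsto_log_gamma (by linarith)).sub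
      (BohrMollerup.tendsto_log_gamma hy.1)

theorem tsum_le_of_le_sub_succ {f u : ℕ → ℝ} (hf : Summable f) (hu : ∀ n, 0 ≤ u n)
    (h : ∀ n, f n ≤ u n - u (n + 1)) : ∑' n, f n ≤ u 0 :=
  hf.tsum_le_of_sum_range_le fun n ↦ (Finset.sum_le_sum fun i _ ↦ h i).trans <| by
    rw [Finset.sum_range_sub']
    linarith [hu n]

namespace F

noncomputable def term (s : ℝ) : ℝ := (s - 5 / 8) / (s * (s + 5 / 4) * (s - 1 / 4))

theorem term_eq {s : ℝ} (hs : 1 / 4 < s) :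
    term s = 2 * s⁻¹ - (s + 5 / 4)⁻¹ - (s - 1 / 4)⁻¹ := by
  have h1 : s ≠ 0 := by linarith
  have h2 : s + 5 / 4 ≠ 0 := by linarith
  have h3 : s - 1 / 4 ≠ 0 := by linarith
  rw [show 2 * s⁻¹ - (s + 5 / 4)⁻¹ - (s - 1 / 4)⁻¹ = (s⁻¹ - (s + 5 / 4)⁻¹) + (s⁻¹ - (s - 1 / 4)⁻¹)
    by ring, inv_sub_inv h1 h2, inv_sub_inv h1 h3, div_add_div _ _ (by positivity) (by positivity),
    term, div_eq_div_iff (by positivity) (by positivity)]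
  ring

theorem term_pos {s : ℝ} (hs : 5 / 8 < s) : 0 < term s := by
  have : 0 < s - 1 / 4 := by linarith
  have : 0 < s - 5 / 8 := by linarith
  unfold term
  positivity

theorem term_nonneg {s : ℝ} (hs : 5 / 8 ≤ s) : 0 ≤ term s := by
  have : 0 < s - 1 / 4 := by linarith
  have : 0 ≤ s - 5 / 8 := by linarith
  unfold term
  positivity

theorem term_le_inv_sub_inv {s : ℝ} (hs : 1 / 4 < s) : term s ≤ s⁻¹ - (s + 1)⁻¹ := by
  have h0 : 0 < s := by linarith
  have h1 : 0 < s - 1 / 4 := by linarith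
  rw [term, inv_sub_inv h0.ne' (by linarith), div_le_div_iff₀ (by positivity) (by positivity)]
  nlinarith [mul_pos h0 h1]

theorem term_sub_term {s₁ s₂ : ℝ} (h₁ : 1 / 4 < s₁) (h₂ : 1 / 4 < s₂) :
    term s₁ - term s₂ = (s₂ - s₁) * (2 * (s₁ * s₂)⁻¹ - ((s₁ + 5 / 4) * (s₂ + 5 / 4))⁻¹
      - ((s₁ - 1 / 4) * (s₂ - 1 / 4))⁻¹) := by
  have inv_sub_inv' : ∀ u v : ℝ, u ≠ 0 → v ≠ 0 → u⁻¹ - v⁻¹ = (v - u) * (u * v)⁻¹ :=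
    fun u v hu hv ↦ by rw [inv_sub_inv hu hv, div_eq_mul_inv]
  calc term s₁ - term s₂ = 2 * (s₁⁻¹ - s₂⁻¹) - ((s₁ + 5 / 4)⁻¹ - (s₂ + 5 / 4)⁻¹)
        - ((s₁ - 1 / 4)⁻¹ - (s₂ - 1 / 4)⁻¹) := by rw [term_eq h₁, term_eq h₂]; ring
    _ = _ := by
      rw [inv_sub_inv' s₁ s₂ (by linarith) (by linarith),
        inv_sub_inv' (s₁ + 5 / 4) (s₂ + 5 / 4) (by linarith) (by linarith),
        inv_sub_inv' (s₁ - 1 / 4) (s₂ - 1 / 4) (by linarith) (by linarith)]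
      ring

theorem term_sub_term_le {s₁ s₂ : ℝ} (h₁ : 1 / 4 < s₁) (h₁₂ : s₁ ≤ s₂) :
    term s₁ - term s₂ ≤ (s₂ - s₁) * ((s₁ * s₂)⁻¹ - ((s₁ + 2) * (s₂ + 2))⁻¹) := by
  rw [term_sub_term h₁ (by linarith)]
  have h1 : (s₁ * s₂)⁻¹ ≤ ((s₁ - 1 / 4) * (s₂ - 1 / 4))⁻¹ :=
    inv_anti₀ (by nlinarith) (mul_le_mul (by linarith) (by linarith) (by linarith) (by linarith))
  have h2 : ((s₁ + 2) * (s₂ + 2))⁻¹ ≤ ((s₁ + 5 / 4) * (s₂ + 5 / 4))⁻¹ :=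
    inv_anti₀ (by nlinarith) (mul_le_mul (by linarith) (by linarith) (by linarith) (by linarith))
  gcongr ?_ * ?_
  linarith

theorem three_halves_mul_le_term_sub_term {a₁ a₂ : ℝ} (h₁ : 1 / 4 < a₁) (h₁₂ : a₁ ≤ a₂)
    (h₂ : a₂ ≤ 5 / 8) : 3 / 2 * (a₂ - a₁) ≤ term a₂ - term a₁ := by
  have hy : 0 < a₂ - 1 / 4 := by linarith
  -- `a ≥ 5/3 (a - 1/4)` on this range, so the pole at `1/4` dominates the one at `0`
  have hpole : 2 * (a₁ * a₂)⁻¹ ≤ 18 / 25 * ((a₁ - 1 / 4) * (a₂ - 1 / 4))⁻¹ := by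
    have ha : 0 < a₁ * a₂ := by nlinarith
    rw [← div_eq_mul_inv, ← div_eq_mul_inv, div_le_div_iff₀ ha (by positivity)]
    nlinarith [mul_le_mul (show 5 / 3 * (a₁ - 1 / 4) ≤ a₁ by linarith)
      (show 5 / 3 * (a₂ - 1 / 4) ≤ a₂ by linarith) (by positivity) (by positivity)]
  have hxy : 64 / 9 ≤ ((a₁ - 1 / 4) * (a₂ - 1 / 4))⁻¹ := by
    rw [le_inv_comm₀ (by norm_num) (by positivity)]
    nlinarith [mul_le_mul (show a₁ - 1 / 4 ≤ 3 / 8 by linarith)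
      (show a₂ - 1 / 4 ≤ 3 / 8 by linarith) hy.le (by norm_num)]
  have hPQ : 0 ≤ ((a₁ + 5 / 4) * (a₂ + 5 / 4))⁻¹ :=
    inv_nonneg.2 (mul_nonneg (by linarith) (by linarith))
  have hdiff := term_sub_term (s₂ := a₂) h₁ (by linarith)
  nlinarith [mul_le_mul_of_nonneg_left (show 3 / 2 ≤ ((a₁ - 1 / 4) * (a₂ - 1 / 4))⁻¹
    + ((a₁ + 5 / 4) * (a₂ + 5 / 4))⁻¹ - 2 * (a₁ * a₂)⁻¹ by linarith) (sub_nonneg.2 h₁₂)]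

noncomputable def logGammaQuot (a : ℝ) : ℝ :=
  (log (Gamma (a + 5 / 4)) - log (Gamma a)) + (log (Gamma (a + -(1 / 4))) - log (Gamma a))

/-- `ψ(a + 5/4) + ψ(a - 1/4) - 2 ψ(a)` for the digamma function `ψ`. -/
noncomputable def logGammaQuotDeriv (a : ℝ) : ℝ := ∑' m : ℕ, term (a + m)

theorem term_add_natCast_eq {a : ℝ} (ha : 1 / 4 < a) (m : ℕ) :
    term (a + m) = ((a + m)⁻¹ - (a + m + 5 / 4)⁻¹) + ((a + m)⁻¹ - (a + m + -(1 / 4))⁻¹) := by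
  rw [term_eq (by linarith [m.cast_nonneg (α := ℝ)])]
  ring

theorem summable_term {a : ℝ} (ha : 1 / 4 < a) : Summable fun m : ℕ ↦ term (a + m) :=
  ((summable_inv_add_sub_inv_add (c := 5 / 4) (by linarith) (by linarith)).add
    (summable_inv_add_sub_inv_add (c := -(1 / 4)) (by linarith) (by linarith))).congr
      fun m ↦ (term_add_natCast_eq ha m).symm

theorem logGammaQuotDeriv_eq {a : ℝ} (ha : 1 / 4 < a) :
    logGammaQuotDeriv a = ∑' m : ℕ, ((a + m)⁻¹ - (a + m + 5 / 4)⁻¹)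
      + ∑' m : ℕ, ((a + m)⁻¹ - (a + m + -(1 / 4))⁻¹) := by
  rw [logGammaQuotDeriv, ← Summable.tsum_add
    (summable_inv_add_sub_inv_add (by linarith) (by linarith))
    (summable_inv_add_sub_inv_add (by linarith) (by linarith))]
  exact tsum_congr (term_add_natCast_eq ha)

theorem hasDerivAt_logGammaQuot {a : ℝ} (ha : 1 / 4 < a) :
    HasDerivAt logGammaQuot (logGammaQuotDeriv a) a := by
  rw [logGammaQuotDeriv_eq ha]
  exact (hasDerivAt_log_Gamma_add_sub_log_Gamma (by linarith) (by linarith)).add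
    (hasDerivAt_log_Gamma_add_sub_log_Gamma (by linarith) (by linarith))

theorem continuousOn_logGammaQuotDeriv : ContinuousOn logGammaQuotDeriv (Ioi (1 / 4)) := by
  have hsub : ∀ c : ℝ, -(1 / 4) ≤ c → Ioi (1 / 4 : ℝ) ⊆ Ioi (max 0 (-c)) := by
    intro c hc a ha
    rw [mem_Ioi] at ha ⊢
    exact max_lt (by linarith) (by linarith)
  refine ((continuousOn_tsum_inv_sub_inv (5 / 4)).mono (hsub _ (by norm_num))).add
    ((continuousOn_tsum_inv_sub_inv (-(1 / 4))).mono (hsub _ le_rfl)) |>.congr fun a ha ↦ ?_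
  exact logGammaQuotDeriv_eq ha

theorem logGammaQuotDeriv_eq_term_add {a : ℝ} (ha : 1 / 4 < a) :
    logGammaQuotDeriv a = term a + ∑' m : ℕ, term (a + 1 + m) := by
  rw [logGammaQuotDeriv, (summable_term ha).tsum_eq_zero_add]
  push_cast
  simp only [add_zero, add_assoc, add_comm (1 : ℝ)]

theorem logGammaQuotDeriv_le {a : ℝ} (ha : 1 / 4 < a) :
    logGammaQuotDeriv a ≤ term a + (a + 1)⁻¹ := by
  have htail : ∑' m : ℕ, term (a + 1 + m) ≤ (a + 1 + (0 : ℕ))⁻¹ :=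
    tsum_le_of_le_sub_succ (u := fun n : ℕ ↦ (a + 1 + n)⁻¹)
      (summable_term (a := a + 1) (by linarith))
      (fun n ↦ (inv_pos.2 (by positivity)).le) fun m ↦ by
        have := term_le_inv_sub_inv (s := a + 1 + m) (by linarith [m.cast_nonneg (α := ℝ)])
        push_cast
        rwa [← add_assoc]
  rw [logGammaQuotDeriv_eq_term_add ha]
  simpa using htail

theorem tsum_term_sub_term_le {a₁ a₂ : ℝ} (h₁ : 1 / 4 < a₁) (h₁₂ : a₁ ≤ a₂) :
    ∑' m : ℕ, (term (a₁ + 1 + m) - term (a₂ + 1 + m)) ≤ 32 / 25 * (a₂ - a₁) := by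
  set w : ℝ → ℝ := fun t ↦ ((a₁ + 1 + t) * (a₂ + 1 + t))⁻¹
  have hw : ∀ t : ℝ, 0 ≤ t → 0 ≤ w t ∧ w t ≤ 16 / 25 := fun t ht ↦ by
    have : 25 / 16 ≤ (a₁ + 1 + t) * (a₂ + 1 + t) := by nlinarith
    exact ⟨inv_nonneg.2 (by linarith), by rw [inv_le_comm₀ (by linarith) (by norm_num)]; linarith⟩
  -- `term s₁ - term s₂` is dominated by a difference of `w` two steps apart, which telescopes
  have htel := tsum_le_of_le_sub_succ (u := fun n : ℕ ↦ (a₂ - a₁) * (w n + w (n + 1)))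
    ((summable_term (a := a₁ + 1) (by linarith)).sub (summable_term (a := a₂ + 1) (by linarith)))
    (fun n ↦ mul_nonneg (sub_nonneg.2 h₁₂)
      (add_nonneg (hw n n.cast_nonneg).1 (hw (n + 1) (by positivity)).1)) fun m ↦ by
        calc term (a₁ + 1 + m) - term (a₂ + 1 + m)
            ≤ (a₂ + 1 + m - (a₁ + 1 + m)) * (((a₁ + 1 + m) * (a₂ + 1 + m))⁻¹
              - ((a₁ + 1 + m + 2) * (a₂ + 1 + m + 2))⁻¹) :=
              term_sub_term_le (by linarith [m.cast_nonneg (α := ℝ)]) (by linarith)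
          _ = _ := by push_cast; ring
  refine htel.trans ?_
  have h0 := hw 0 le_rfl
  have h1 := hw 1 zero_le_one
  push_cast
  nlinarith

theorem logGammaQuotDeriv_strictMonoOn : StrictMonoOn logGammaQuotDeriv (Ioc (1 / 4) (5 / 8)) := by
  intro a₁ h₁ a₂ h₂ h₁₂
  have hhead := three_halves_mul_le_term_sub_term h₁.1 h₁₂.le h₂.2
  have htail := tsum_term_sub_term_le h₁.1 h₁₂.le
  rw [Summable.tsum_sub (summable_term (a := a₁ + 1) (by linarith [h₁.1]))
    (summable_term (a := a₂ + 1) (by linarith [h₂.1]))] at htail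
  rw [logGammaQuotDeriv_eq_term_add h₁.1, logGammaQuotDeriv_eq_term_add h₂.1]
  linarith

theorem logGammaQuotDeriv_pos {a : ℝ} (ha : 5 / 8 ≤ a) : 0 < logGammaQuotDeriv a :=
  (summable_term (by linarith)).tsum_pos
    (fun m ↦ term_nonneg (by linarith [m.cast_nonneg (α := ℝ)])) 1
    (term_pos (by push_cast; linarith))

theorem logGammaQuotDeriv_one_third_neg : logGammaQuotDeriv (1 / 3) < 0 := by
  have := logGammaQuotDeriv_le (a := 1 / 3) (by norm_num)
  norm_num [term] at this
  linarith

theorem exists_logGammaQuotDeriv_eq_zero :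
    ∃ a₀ ∈ Ioo (1 / 3 : ℝ) (5 / 8), logGammaQuotDeriv a₀ = 0 :=
  intermediate_value_Ioo (by norm_num)
    (continuousOn_logGammaQuotDeriv.mono fun _ ha ↦ lt_of_lt_of_le (by norm_num) ha.1)
    ⟨logGammaQuotDeriv_one_third_neg, logGammaQuotDeriv_pos le_rfl⟩

theorem logGammaQuotDeriv_neg_of_lt {a₀ a : ℝ} (h₀ : a₀ ≤ 5 / 8)
    (hroot : logGammaQuotDeriv a₀ = 0) (ha : 1 / 4 < a) (ha₀ : a < a₀) :
    logGammaQuotDeriv a < 0 :=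
  hroot ▸ logGammaQuotDeriv_strictMonoOn ⟨ha, by linarith⟩ ⟨ha.trans ha₀, h₀⟩ ha₀

theorem logGammaQuotDeriv_pos_of_gt {a₀ a : ℝ} (h₀ : 1 / 4 < a₀)
    (hroot : logGammaQuotDeriv a₀ = 0) (ha₀ : a₀ < a) : 0 < logGammaQuotDeriv a := by
  rcases le_or_gt a (5 / 8) with ha | ha
  · exact hroot ▸ logGammaQuotDeriv_strictMonoOn ⟨h₀, ha₀.le.trans ha⟩ ⟨h₀.trans ha₀, ha⟩ ha₀
  · exact logGammaQuotDeriv_pos ha.le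

theorem eq_exp_logGammaQuot {x : ℝ} (hx : 1 < x) : F x = exp (logGammaQuot (x / 2 - 1 / 4)) := by
  have h₁ : 0 < Gamma (x / 2 + 1) := Gamma_pos_of_pos (by linarith)
  have h₂ : 0 < Gamma (x / 2 - 1 / 2) := Gamma_pos_of_pos (by linarith)
  have h₃ : 0 < Gamma (x / 2 - 1 / 4) := Gamma_pos_of_pos (by linarith)
  rw [logGammaQuot, show x / 2 - 1 / 4 + 5 / 4 = x / 2 + 1 by ring,
    show x / 2 - 1 / 4 + -(1 / 4) = x / 2 - 1 / 2 by ring, exp_add, exp_sub, exp_sub,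
    exp_log h₁, exp_log h₂, exp_log h₃, F]
  field_simp

theorem hasDerivAt {x : ℝ} (hx : 1 < x) :
    HasDerivAt F (F x * (logGammaQuotDeriv (x / 2 - 1 / 4) / 2)) x := by
  have haffine : HasDerivAt (fun y : ℝ ↦ y / 2 - 1 / 4) (1 / 2) x :=
    ((hasDerivAt_id x).div_const 2).sub_const (1 / 4)
  have h := ((hasDerivAt_logGammaQuot (by linarith)).comp x haffine).exp
  simp only [Function.comp_apply] at h
  rw [← eq_exp_logGammaQuot hx] at h
  refine (h.congr_deriv (by ring)).congr_of_eventuallyEq ?_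
  filter_upwards [Ioi_mem_nhds hx] with y hy using eq_exp_logGammaQuot hy

theorem pos {x : ℝ} (hx : 1 < x) : 0 < F x := by
  rw [eq_exp_logGammaQuot hx]
  exact exp_pos _

theorem continuousOn {s : Set ℝ} (hs : s ⊆ Ioi 1) : ContinuousOn F s :=
  fun _ hx ↦ (hasDerivAt (hs hx)).continuousAt.continuousWithinAt

theorem strictAntiOn_Ioc {a₀ : ℝ} (h₀ : a₀ ≤ 5 / 8)
    (hroot : logGammaQuotDeriv a₀ = 0) : StrictAntiOn F (Ioc 1 (2 * a₀ + 1 / 2)) := by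
  refine strictAntiOn_of_deriv_neg (convex_Ioc _ _) (continuousOn fun _ hx ↦ hx.1) fun x hx ↦ ?_
  rw [interior_Ioc] at hx
  rw [(hasDerivAt hx.1).deriv]
  have := logGammaQuotDeriv_neg_of_lt (a := x / 2 - 1 / 4) h₀ hroot (by linarith [hx.1])
    (by linarith [hx.2])
  exact mul_neg_of_pos_of_neg (pos hx.1) (by linarith)

theorem strictMonoOn_Ici {a₀ : ℝ} (h₀ : 1 / 4 < a₀) (hroot : logGammaQuotDeriv a₀ = 0) :
    StrictMonoOn F (Ici (2 * a₀ + 1 / 2)) := by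
  refine strictMonoOn_of_deriv_pos (convex_Ici _)
    (continuousOn fun x (hx : _ ≤ x) ↦ by simp only [mem_Ioi]; linarith) fun x hx ↦ ?_
  rw [interior_Ici] at hx
  have hx : 2 * a₀ + 1 / 2 < x := hx
  rw [(hasDerivAt (by linarith)).deriv]
  have := pos (show 1 < x by linarith)
  have := logGammaQuotDeriv_pos_of_gt h₀ hroot (show a₀ < x / 2 - 1 / 4 by linarith)
  positivity

end F

theorem stmt12 :
    ∃ x₀ : ℝ, 1 < x₀ ∧ x₀ < 2 ∧
      StrictAntiOn F (Set.Ioc 1 x₀) ∧ StrictMonoOn F (Set.Ici x₀) ∧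
      ∀ x : ℝ, 1 < x → F x₀ ≤ F x := by
  obtain ⟨a₀, ⟨h₁, h₂⟩, hroot⟩ := F.exists_logGammaQuotDeriv_eq_zero
  have hanti := F.strictAntiOn_Ioc h₂.le hroot
  have hmono := F.strictMonoOn_Ici (by linarith) hroot
  refine ⟨2 * a₀ + 1 / 2, by linarith, by linarith, hanti, hmono, fun x hx ↦ ?_⟩
  rcases le_total x (2 * a₀ + 1 / 2) with h | h
  · exact hanti.antitoneOn ⟨hx, h⟩ ⟨by linarith, le_rfl⟩ h
  · exact hmono.monotoneOn self_mem_Ici h h
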